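/- Suppose that for each n ∈ ℕ the 2×n grid G_n admits an anagram-free vertex c-colouring. Then there exist ℓ ∈ ℕ and a vertex c-colouring φ* of G_4 such that, for each r_0 ∈ ℕ and each real ε > 0, there exist an integer r ≥ r_0 and a string s = s_1,…,s_{2r} ∈ (Σ_{c,ℓ})^{2r} with τ(s) ≤ ε·r such that φ_s is an anagram-free vertex c-colouring of G_{n_s}. -/

import Mathlib

/-!
By compactness (a limit along a free ultrafilter), anagram-free colourings of all finite grids
yield a colouring of the infinite strip `2 × ℕ` all of whose finite windows are anagram-free.
Cut the strip into blocks of four columns. Only finitely many block colourings exist, so one of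
them, `φ*`, recurs with bounded gaps along arbitrarily long stretches (piecewise syndeticity,
proved by induction on a set of colourings avoided on arbitrarily long intervals). Reading such a
stretch from one occurrence of `φ*` to the next gives an arbitrarily long word over `Σ_{c,ℓ}`
whose colouring `φ_s` is a window of the strip, as is the colouring of each of its factors.

It remains to find a factor `s` of length `2r`, `r ≥ r₀`, with `τ(s) ≤ εr`. This is an
energy-increment argument: the energy `∑ₐ (frequency of a)²` of a word lies in `[0, 1]`, and
when the two halves of a word are far from anagrams (`τ > εr`), Cauchy–Schwarz shows that their
average energy exceeds the energy of the word by at least `ε² / (4 |Σ|)`. Halving repeatedly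
from a word of length `2ᴷ r₀` therefore meets a balanced factor within `4 |Σ| / ε²` steps.
-/


/-- A string (list) is anagramish: it has positive even length `2r` and its first half
is a permutation (anagram) of its second half. -/
def IsAnagramish {α : Type*} (l : List α) : Prop :=
  ∃ r : ℕ, 0 < r ∧ l.length = 2 * r ∧ (l.take r).Perm (l.drop r)

/-- A vertex colouring is anagram-free: no path (list of pairwise distinct
vertices with consecutive vertices adjacent) has an anagramish colour string. -/
def AnagramFree {V : Type*} {c : ℕ} (G : SimpleGraph V) (φ : V → Fin c) : Prop :=
  ∀ l : List V, l.Chain' G.Adj → l.Nodup → ¬ IsAnagramish (l.map φ)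

/-- The `m × n` grid graph: box product of two path graphs. -/
def grid (m n : ℕ) : SimpleGraph (Fin m × Fin n) :=
  (SimpleGraph.pathGraph m).boxProd (SimpleGraph.pathGraph n)

/-- A string is `ℓ`-periodic if every contiguous length-`ℓ` substring contains every
character occurring in the string. -/
def LPeriodic {α : Type*} (ℓ : ℕ) (s : List α) : Prop :=
  ∀ i, i + ℓ ≤ s.length → ∀ a ∈ s, a ∈ (s.drop i).take ℓ

/-- `tau r l`: for a string `l` of length `2r`, the sum over all characters `a` of
`|hist_a(first half) - hist_a(second half)|`. -/
noncomputable def tau {α : Type*} (r : ℕ) (l : List α) : ℕ :=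
  letI := Classical.decEq α
  (l.dedup.map (fun a =>
    (((l.take r).count a : ℤ) - ((l.drop r).count a : ℤ)).natAbs)).sum

/-- The alphabet `Σ_{c,ℓ}`: pairs `(k, φ)` with `k ∈ {1,…,ℓ}` (encoded as `k : Fin ℓ`
standing for `k+1`) and `φ` a vertex `c`-colouring of `G_{4(k+1)}`. -/
def SymAlpha (c ℓ : ℕ) : Type :=
  Σ k : Fin ℓ, (Fin 2 × Fin (4 * (k.val + 1)) → Fin c)

/-- The columns of a boring block: four columns coloured according to `φ*`. -/
def boringCols {c : ℕ} (φstar : Fin 2 × Fin 4 → Fin c) : List (Fin 2 → Fin c) :=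
  (List.finRange 4).map (fun j i => φstar (i, j))

/-- The columns of the colourful block determined by a symbol `(k, φ) ∈ Σ_{c,ℓ}`:
`4(k+1)` columns coloured according to `φ`. -/
def colourfulCols {c ℓ : ℕ} (a : SymAlpha c ℓ) : List (Fin 2 → Fin c) :=
  (List.finRange (4 * (a.1.val + 1))).map (fun j i => a.2 (i, j))

/-- The columns of `G_{n_s}` coloured by `φ_s`: for each symbol `s_i = (k_i, φ_i)` of
`s`, a boring block (columns `n_{s,i-1},…,n_{s,i-1}+3`, coloured by `φ*`) followed by a
colourful block (columns `n_{s,i-1}+4,…,n_{s,i}-1`, coloured by `φ_i`).  The total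
number of columns is `n_s = n_{s,r} = 4(r + Σ_j k_j)`. -/
def colsOf {c ℓ : ℕ} (φstar : Fin 2 × Fin 4 → Fin c) (s : List (SymAlpha c ℓ)) :
    List (Fin 2 → Fin c) :=
  (s.map (fun a => boringCols φstar ++ colourfulCols a)).flatten

/-- The vertex `c`-colouring `φ_s` of the grid `G_{n_s}` determined by `φ*` and `s`. -/
def phiOfSym {c ℓ : ℕ} (φstar : Fin 2 × Fin 4 → Fin c) (s : List (SymAlpha c ℓ)) :
    Fin 2 × Fin (colsOf φstar s).length → Fin c :=
  fun v => (colsOf φstar s).get ⟨v.2.val, v.2.isLt⟩ v.1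

instance (c ℓ : ℕ) : Fintype (SymAlpha c ℓ) :=
  inferInstanceAs (Fintype (Σ k : Fin ℓ, (Fin 2 × Fin (4 * (k.val + 1)) → Fin c)))

section Grid

variable {c : ℕ}

theorem AnagramFree.comp {V W : Type*} {G : SimpleGraph V} {H : SimpleGraph W} {φ : W → Fin c}
    (hφ : AnagramFree H φ) (e : G →g H) (he : Function.Injective e) :
    AnagramFree G (φ ∘ e) := by
  intro l hchain hnodup hana
  refine hφ (l.map e) ?_ (hnodup.map he) (by rwa [List.map_map])
  exact (List.isChain_map e).2 (hchain.imp fun _ _ => e.map_adj)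

def gridShift (k : ℕ) {m n : ℕ} (a : ℕ) (h : a + m ≤ n) : grid k m →g grid k n where
  toFun v := (v.1, ⟨a + v.2, by omega⟩)
  map_rel' := by
    rintro ⟨i, j⟩ ⟨i', j'⟩ hadj
    simp only [grid, SimpleGraph.boxProd_adj, SimpleGraph.pathGraph_adj, Fin.ext_iff] at hadj ⊢
    omega

theorem gridShift_injective (k : ℕ) {m n : ℕ} (a : ℕ) (h : a + m ≤ n) :
    Function.Injective (gridShift k a h) := by
  rintro ⟨i, j⟩ ⟨i', j'⟩ heq
  simp only [gridShift, RelHom.coeFn_mk, Prod.mk.injEq, Fin.ext_iff, Nat.add_left_cancel_iff] at heq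
  exact Prod.ext (Fin.ext heq.1) (Fin.ext heq.2)

variable {k : ℕ}

def ColumnsAnagramFree (L : List (Fin k → Fin c)) : Prop :=
  AnagramFree (grid k L.length) fun v => L[v.2] v.1

theorem columnsAnagramFree_of_window {n : ℕ} {φ : Fin k × Fin n → Fin c}
    (hφ : AnagramFree (grid k n) φ) (L : List (Fin k → Fin c)) (a : ℕ) (hlen : a + L.length ≤ n)
    (hL : ∀ (j : ℕ) (hj : j < L.length) (i : Fin k), L[j] i = φ (i, ⟨a + j, by omega⟩)) :
    ColumnsAnagramFree L := by
  have hcomp : (fun v : Fin k × Fin L.length => L[v.2] v.1) = φ ∘ gridShift k a hlen := by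
    funext v
    exact hL v.2 v.2.isLt v.1
  rw [ColumnsAnagramFree, hcomp]
  exact hφ.comp _ (gridShift_injective k a hlen)

theorem ColumnsAnagramFree.of_isInfix {L L' : List (Fin k → Fin c)} (h : ColumnsAnagramFree L')
    (hinf : L <:+: L') : ColumnsAnagramFree L := by
  obtain ⟨pre, suf, rfl⟩ := hinf
  refine columnsAnagramFree_of_window h L pre.length (by simp) fun j hj i => ?_
  simp only [Fin.getElem_fin, List.length_append, add_lt_add_iff_left, hj, List.getElem_append_left,
    le_add_iff_nonneg_right, zero_le, List.getElem_append_right]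
  exact congrFun (getElem_congr_idx (by omega)) i

theorem exists_columnsAnagramFree_windows
    (h : ∀ n : ℕ, ∃ φ : Fin k × Fin n → Fin c, AnagramFree (grid k n) φ) :
    ∃ f : ℕ → Fin k → Fin c, ∀ a n, ColumnsAnagramFree ((List.range' a n).map f) := by
  choose φ hφ using h
  let ψ : ℕ → ℕ → Fin k → Fin c := fun n j i =>
    if hj : j < n then φ n (i, ⟨j, hj⟩) else φ 1 (i, 0)
  have hlim : ∀ j, ∃ col, ∀ᶠ n in Filter.hyperfilter ℕ, ψ n j = col := fun j => by
    obtain ⟨col, hcol⟩ := ((Filter.hyperfilter ℕ).map fun n => ψ n j).eq_pure_of_finite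
    exact ⟨col, Ultrafilter.mem_map.1 (hcol ▸ rfl : {col} ∈ _)⟩
  choose f hf using hlim
  refine ⟨f, fun a n => ?_⟩
  have hev : ∀ᶠ m in Filter.hyperfilter ℕ, a + n ≤ m ∧ ∀ j ∈ Finset.range (a + n), ψ m j = f j :=
    (Filter.Eventually.filter_mono Filter.hyperfilter_le_cofinite
      (by rw [Nat.cofinite_eq_atTop]; exact Filter.eventually_ge_atTop _)).and
      ((Filter.eventually_all_finset _).2 fun j _ => hf j)
  obtain ⟨m, hm, hagree⟩ := hev.exists
  refine columnsAnagramFree_of_window (hφ m) _ a (by simpa using hm) fun j hj i => ?_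
  simp only [List.length_map, List.length_range'] at hj
  simp [← hagree (a + j) (Finset.mem_range.2 (by omega)), ψ, show a + j < m by omega]

end Grid

section Recurrence

variable {P : Type*} (b : ℕ → P)

theorem exists_piecewise_syndetic [Finite P] :
    ∃ (p : P) (G : ℕ), ∀ L, ∃ x, ∀ y, x ≤ y → y + G ≤ x + L → ∃ k < G, b (y + k) = p := by
  classical
  cases nonempty_fintype P
  by_contra! hbad
  have avoid : ∀ (S : Finset P) (T : ℕ), ∃ x, ∀ k < T, b (x + k) ∉ S := by
    intro S
    induction S using Finset.induction_on with
    | empty => exact fun _ => ⟨0, by simp⟩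
    | insert p S _ ih =>
      intro T
      obtain ⟨L, hL⟩ := hbad p T
      obtain ⟨x, hx⟩ := ih L
      obtain ⟨y, hxy, hyL, hy⟩ := hL x
      refine ⟨y, fun k hk => Finset.mem_insert.not.2 (not_or.2 ⟨hy k hk, ?_⟩)⟩
      simpa [show x + (y - x + k) = y + k by omega] using hx (y - x + k) (by omega)
  obtain ⟨x, hx⟩ := avoid Finset.univ 1
  exact hx 0 one_pos (Finset.mem_univ _)

theorem exists_run_of_forall_window {p : P} {d G : ℕ} (R : ℕ) {x : ℕ}
    (hwin : ∀ y, x ≤ y → y + G ≤ x + (R + 1) * (d + G) → ∃ k < G, b (y + k) = p) :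
    ∃ t : ℕ → ℕ, x ≤ t 0 ∧ t 0 < x + G ∧ (∀ j ≤ R, b (t j) = p) ∧
      ∀ j < R, t j + d ≤ t (j + 1) ∧ t (j + 1) < t j + d + G := by
  induction R generalizing x with
  | zero =>
    obtain ⟨k, hk, hbk⟩ := hwin x le_rfl (by omega)
    exact ⟨fun _ => x + k, Nat.le_add_right x k, Nat.add_lt_add_left hk x, fun _ _ => hbk,
      fun j hj => absurd hj j.not_lt_zero⟩
  | succ R ih =>
    obtain ⟨k, hk, hbk⟩ := hwin x le_rfl (by nlinarith)
    obtain ⟨t, ht₀, ht₀', hb, hgap⟩ := ih (x := x + k + d) fun y h₁ h₂ =>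
      hwin y (by omega) (by nlinarith)
    refine ⟨fun | 0 => x + k | j + 1 => t j, Nat.le_add_right x k, Nat.add_lt_add_left hk x, ?_, ?_⟩
    · rintro (_ | j) hj
      exacts [hbk, hb j (by omega)]
    · rintro (_ | j) hj
      exacts [⟨ht₀, ht₀'⟩, hgap j (by omega)]

theorem exists_recurrent_run [Finite P] (d : ℕ) :
    ∃ (p : P) (G : ℕ), ∀ R, ∃ t : ℕ → ℕ, (∀ j ≤ R, b (t j) = p) ∧
      ∀ j < R, t j + d ≤ t (j + 1) ∧ t (j + 1) < t j + d + G := by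
  obtain ⟨p, G, hsyn⟩ := exists_piecewise_syndetic b
  refine ⟨p, G, fun R => ?_⟩
  obtain ⟨x, hx⟩ := hsyn ((R + 1) * (d + G))
  obtain ⟨t, -, -, hb, hgap⟩ := exists_run_of_forall_window b R hx
  exact ⟨t, hb, hgap⟩

end Recurrence

section Energy

variable {α : Type*} [Fintype α] [DecidableEq α]

noncomputable def energy (l : List α) : ℝ :=
  ∑ a, ((l.count a : ℝ) / l.length) ^ 2

def discrepancy (l₁ l₂ : List α) : ℕ :=
  ∑ a, ((l₁.count a : ℤ) - l₂.count a).natAbs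

theorem sum_count_eq_length (l : List α) : ∑ a, l.count a = l.length := by
  simpa using Multiset.sum_count_eq_card (s := Finset.univ) (m := (l : Multiset α)) (by simp)

theorem energy_nonneg (l : List α) : 0 ≤ energy l := by
  unfold energy; positivity

theorem energy_le_one (l : List α) : energy l ≤ 1 := by
  rcases Nat.eq_zero_or_pos l.length with hl | hl
  · simp [energy, hl]
  have hsq : ∑ a, (l.count a : ℝ) ^ 2 ≤ (l.length : ℝ) ^ 2 := by
    rw [← sum_count_eq_length l]
    push_cast
    exact Finset.sum_sq_le_sq_sum_of_nonneg fun _ _ => Nat.cast_nonneg _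
  simp only [energy, div_pow, ← Finset.sum_div]
  exact div_le_one_of_le₀ hsq (by positivity)

theorem energy_add_energy {l₁ l₂ : List α} (h : l₁.length = l₂.length) :
    energy l₁ + energy l₂ = 2 * energy (l₁ ++ l₂) +
      (∑ a, (((l₁.count a : ℝ) - l₂.count a) / l₁.length) ^ 2) / 2 := by
  simp only [energy, List.length_append, List.count_append, ← h, Finset.mul_sum, Finset.sum_div,
    ← Finset.sum_add_distrib]
  refine Finset.sum_congr rfl fun a _ => ?_
  push_cast
  rcases Nat.eq_zero_or_pos l₁.length with h0 | h0
  · simp [h0]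
  field_simp
  ring

theorem discrepancy_sq_le (l₁ l₂ : List α) :
    (discrepancy l₁ l₂ : ℝ) ^ 2 ≤ Fintype.card α * ∑ a, ((l₁.count a : ℝ) - l₂.count a) ^ 2 := by
  have := sq_sum_le_card_mul_sum_sq (s := Finset.univ)
    (f := fun a => |(l₁.count a : ℝ) - l₂.count a|)
  simpa [discrepancy, Nat.cast_natAbs] using this

theorem energy_gain_of_discrepancy {ε : ℝ} (hε : 0 ≤ ε) {l₁ l₂ : List α}
    (h : l₁.length = l₂.length) (hdisc : ε * l₁.length < discrepancy l₁ l₂) :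
    ε ^ 2 ≤ 2 * Fintype.card α * (energy l₁ + energy l₂ - 2 * energy (l₁ ++ l₂)) := by
  have hm : (0 : ℝ) < l₁.length := by
    refine Nat.cast_pos.2 (Nat.pos_of_ne_zero fun (h0 : l₁.length = 0) => ?_)
    rw [List.length_eq_zero_iff.1 h0, List.length_eq_zero_iff.1 (h.symm.trans h0)] at hdisc
    simp [discrepancy] at hdisc
  have hsq : (ε * l₁.length) ^ 2 ≤ (discrepancy l₁ l₂ : ℝ) ^ 2 := by gcongr
  calc ε ^ 2 = (ε * l₁.length) ^ 2 / (l₁.length : ℝ) ^ 2 := by field_simp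
    _ ≤ Fintype.card α * (∑ a, ((l₁.count a : ℝ) - l₂.count a) ^ 2) / (l₁.length : ℝ) ^ 2 := by
      gcongr
      exact hsq.trans (discrepancy_sq_le l₁ l₂)
    _ = _ := by
      rw [energy_add_energy h]
      simp only [div_pow, ← Finset.sum_div]
      ring

def HasBalancedSplit (ε : ℝ) (r₁ : ℕ) (l : List α) : Prop :=
  ∃ l₁ l₂ : List α, l₁ ++ l₂ <:+: l ∧ l₁.length = l₂.length ∧ r₁ ≤ l₁.length ∧
    (discrepancy l₁ l₂ : ℝ) ≤ ε * l₁.length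

theorem HasBalancedSplit.mono {ε : ℝ} {r₁ : ℕ} {l l' : List α} (h : HasBalancedSplit ε r₁ l)
    (hl : l <:+: l') : HasBalancedSplit ε r₁ l' := by
  obtain ⟨l₁, l₂, hinf, hrest⟩ := h
  exact ⟨l₁, l₂, hinf.trans hl, hrest⟩

theorem hasBalancedSplit_or_energy_le {ε : ℝ} (hε : 0 ≤ ε) (r₁ k : ℕ) (l : List α)
    (hl : l.length = 2 ^ k * r₁) :
    HasBalancedSplit ε r₁ l ∨ k * ε ^ 2 ≤ 4 * Fintype.card α * (1 - energy l) := by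
  induction k generalizing l with
  | zero =>
    right
    have := energy_le_one l
    simp only [CharP.cast_eq_zero, zero_mul]
    exact mul_nonneg (by positivity) (by linarith)
  | succ k ih =>
    set m := 2 ^ k * r₁
    have hlen : l.length = m + m := by rw [hl, pow_succ]; ring
    obtain ⟨l₁, l₂, rfl, h₁, h₂⟩ : ∃ l₁ l₂, l = l₁ ++ l₂ ∧ l₁.length = m ∧ l₂.length = m :=
      ⟨l.take m, l.drop m, (List.take_append_drop m l).symm, by simp [hlen], by simp [hlen]⟩
    by_cases hdisc : (discrepancy l₁ l₂ : ℝ) ≤ ε * m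
    · refine .inl ⟨_, _, List.infix_refl _, h₁.trans h₂.symm, ?_, h₁ ▸ hdisc⟩
      exact h₁ ▸ Nat.le_mul_of_pos_left r₁ (Nat.two_pow_pos k)
    rcases ih _ h₁ with hb | he₁
    · exact .inl (hb.mono (List.prefix_append _ _).isInfix)
    rcases ih _ h₂ with hb | he₂
    · exact .inl (hb.mono (List.suffix_append _ _).isInfix)
    have hgain := energy_gain_of_discrepancy hε (h₁.trans h₂.symm) (by rw [h₁]; linarith)
    right
    push_cast
    linarith

theorem exists_hasBalancedSplit {ε : ℝ} (hε : 0 < ε) (r₁ : ℕ) :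
    ∃ K, ∀ l : List α, 2 ^ K * r₁ ≤ l.length → HasBalancedSplit ε r₁ l := by
  obtain ⟨K, hK⟩ := exists_nat_gt (4 * Fintype.card α / ε ^ 2)
  refine ⟨K, fun l hl => ?_⟩
  have hsplit := hasBalancedSplit_or_energy_le hε.le r₁ K (l.take (2 ^ K * r₁)) (by simp [hl])
  refine (hsplit.resolve_right fun he => ?_).mono (List.take_prefix _ _).isInfix
  have := energy_nonneg (l.take (2 ^ K * r₁))
  rw [div_lt_iff₀ (by positivity)] at hK
  nlinarith

theorem tau_append_le_discrepancy (l₁ l₂ : List α) :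
    tau l₁.length (l₁ ++ l₂) ≤ discrepancy l₁ l₂ := by
  -- `tau` counts with classical decidable equality
  obtain rfl : ‹DecidableEq α› = Classical.decEq α := Subsingleton.elim _ _
  let := Classical.decEq α
  unfold tau discrepancy
  simp only [List.take_left', List.drop_left']
  rw [← List.sum_toFinset _ (List.nodup_dedup _)]
  exact Finset.sum_le_sum_of_subset (Finset.subset_univ _)

end Energy

section Blocks

variable {c ℓ : ℕ}

theorem map_finRange_add_eq_map_range' {β : Type*} (g : ℕ → β) (a n : ℕ) :
    (List.finRange n).map (fun j : Fin n => g (a + j)) = (List.range' a n).map g := by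
  refine List.ext_getElem (by simp) fun i _ _ => ?_
  simp

theorem range'_append_range' {s m s' n : ℕ} (h : s + m = s') :
    List.range' s m ++ List.range' s' n = List.range' s (m + n) := by
  subst h
  simp

theorem colsOf_append_singleton (p : Fin 2 × Fin 4 → Fin c) (W : List (SymAlpha c ℓ))
    (a : SymAlpha c ℓ) : colsOf p (W ++ [a]) = colsOf p W ++ (boringCols p ++ colourfulCols a) := by
  simp [colsOf]

-- The symbol read between occurrences of `φ*` at blocks `x` and `x + k + 2`: its colourful part
-- consists of the `k + 1` blocks strictly between them.
def gapSymbol (f : ℕ → Fin 2 → Fin c) (x : ℕ) (k : Fin ℓ) : SymAlpha c ℓ :=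
  ⟨k, fun v => f (4 * x + 4 + v.2) v.1⟩

theorem boringCols_append_colourfulCols_gapSymbol {f : ℕ → Fin 2 → Fin c}
    {p : Fin 2 × Fin 4 → Fin c} {x : ℕ} (hp : (fun v : Fin 2 × Fin 4 => f (4 * x + v.2) v.1) = p)
    (k : Fin ℓ) :
    boringCols p ++ colourfulCols (gapSymbol f x k) =
      (List.range' (4 * x) (4 * (k + 2))).map f := by
  have hboring : boringCols p = (List.range' (4 * x) 4).map f := by
    subst hp
    exact map_finRange_add_eq_map_range' f _ _
  have hcolourful :
      colourfulCols (gapSymbol f x k) = (List.range' (4 * x + 4) (4 * (k + 1))).map f :=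
    map_finRange_add_eq_map_range' f _ _
  rw [hboring, hcolourful, ← List.map_append, range'_append_range' rfl]
  ring_nf

theorem exists_colsOf_eq_window (f : ℕ → Fin 2 → Fin c) (p : Fin 2 × Fin 4 → Fin c)
    (t : ℕ → ℕ) (R : ℕ) (hp : ∀ j ≤ R, (fun v : Fin 2 × Fin 4 => f (4 * t j + v.2) v.1) = p)
    (hgap : ∀ j < R, t j + 2 ≤ t (j + 1) ∧ t (j + 1) < t j + 2 + ℓ) :
    ∃ W : List (SymAlpha c ℓ), W.length = R ∧ t 0 ≤ t R ∧
      colsOf p W = (List.range' (4 * t 0) (4 * (t R - t 0))).map f := by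
  induction R with
  | zero => exact ⟨[], rfl, le_rfl, by simp [colsOf]⟩
  | succ R ih =>
    obtain ⟨W, hlen, hmono, hW⟩ :=
      ih (fun j hj => hp j (by omega)) (fun j hj => hgap j (by omega))
    obtain ⟨hlo, hhi⟩ := hgap R R.lt_succ_self
    refine ⟨W ++ [gapSymbol f (t R) ⟨t (R + 1) - t R - 2, by omega⟩], by simp [hlen], by omega, ?_⟩
    rw [colsOf_append_singleton, hW, boringCols_append_colourfulCols_gapSymbol (hp R (by omega)),
      ← List.map_append, range'_append_range' (by omega)]
    congr 2
    show 4 * (t R - t 0) + 4 * (t (R + 1) - t R - 2 + 2) = 4 * (t (R + 1) - t 0)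
    omega

end Blocks

/-- If every `2 × n` grid admits an anagram-free vertex `c`-colouring, then there are
`ℓ ∈ ℕ` and a colouring `φ*` of `G₄` such that for each `r₀` and `ε > 0` there exist
`r ≥ r₀` and `s ∈ (Σ_{c,ℓ})^{2r}` with `τ(s) ≤ ε r` for which `φ_s` is an anagram-free
colouring of `G_{n_s}`. -/
theorem near_anagram_graph (c : ℕ)
    (h : ∀ n : ℕ, ∃ φ : Fin 2 × Fin n → Fin c, AnagramFree (grid 2 n) φ) :
    ∃ (ℓ : ℕ) (φstar : Fin 2 × Fin 4 → Fin c),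
      ∀ (r₀ : ℕ) (ε : ℝ), 0 < ε →
        ∃ r : ℕ, r₀ ≤ r ∧ ∃ s : List (SymAlpha c ℓ), s.length = 2 * r ∧
          (tau r s : ℝ) ≤ ε * r ∧
          AnagramFree (grid 2 (colsOf φstar s).length) (phiOfSym φstar s) := by
  classical
  obtain ⟨f, hf⟩ := exists_columnsAnagramFree_windows h
  obtain ⟨p, G, hrun⟩ := exists_recurrent_run (fun x (v : Fin 2 × Fin 4) => f (4 * x + v.2) v.1) 2
  refine ⟨G, p, fun r₀ ε hε => ?_⟩
  obtain ⟨K, hK⟩ := exists_hasBalancedSplit (α := SymAlpha c G) hε r₀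
  obtain ⟨t, hp, hgap⟩ := hrun (2 ^ K * r₀)
  obtain ⟨W, hWlen, -, hW⟩ := exists_colsOf_eq_window f p t _ hp hgap
  obtain ⟨l₁, l₂, hinf, hlen, hr, hdisc⟩ := hK W hWlen.ge
  refine ⟨l₁.length, hr, l₁ ++ l₂, by rw [List.length_append, ← hlen, two_mul], ?_, ?_⟩
  · exact (Nat.cast_le.2 (tau_append_le_discrepancy l₁ l₂)).trans hdisc
  · have hsub : colsOf p (l₁ ++ l₂) <:+: colsOf p W := (hinf.map _).flatten
    exact (hf _ _).of_isInfix (hW ▸ hsub)
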